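/- Let φ : [0,∞) → (0,1] be continuous and monotonically decreasing to zero, with winding radii r_n = φ(2π(n−1)). Then every unit vector u ∈ S¹ is an asymptotic direction of the spiral C_φ at (0,0); moreover, for every u ∈ S¹ there exists a sequence of points a_n ∈ C_φ with a_n/‖a_n‖ = u and r_{n+1} ≤ ‖a_n‖ ≤ r_n for every n ≥ 1. In particular D(C_φ) = S¹. -/

import Mathlib

open Filter

noncomputable section

/-- The point `(x, y)` in the Euclidean plane. -/
def V2 (x y : ℝ) : EuclideanSpace ℝ (Fin 2) := (WithLp.equiv 2 (Fin 2 → ℝ)).symm ![x, y]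

/-- The spiral `C_φ = {φ(t)(cos t, sin t) : t ≥ 0} ∪ {0}`. -/
def spiral (φ : ℝ → ℝ) : Set (EuclideanSpace ℝ (Fin 2)) :=
  {p | ∃ t : ℝ, 0 ≤ t ∧ p = φ t • V2 (Real.cos t) (Real.sin t)} ∪ {0}

/-- `h` is bi-Lipschitz with constant `L`. -/
def BiLip {d : ℕ} (L : ℝ) (h : EuclideanSpace ℝ (Fin d) → EuclideanSpace ℝ (Fin d)) : Prop :=
  ∀ x y, (1 / L) * ‖x - y‖ ≤ ‖h x - h y‖ ∧ ‖h x - h y‖ ≤ L * ‖x - y‖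

/-- The set of asymptotic directions of `A` at `o`. -/
def asymDirs {d : ℕ} (A : Set (EuclideanSpace ℝ (Fin d))) (o : EuclideanSpace ℝ (Fin d)) :
    Set (EuclideanSpace ℝ (Fin d)) :=
  {u | ‖u‖ = 1 ∧ ∃ a : ℕ → EuclideanSpace ℝ (Fin d), (∀ n, a n ∈ A) ∧ (∀ n, a n ≠ o) ∧
    Tendsto a atTop (nhds o) ∧
    Tendsto (fun n => ‖a n - o‖⁻¹ • (a n - o)) atTop (nhds u)}

/-- The cone at `o` over the set of asymptotic directions of `A` at `o`. -/
def cone {d : ℕ} (A : Set (EuclideanSpace ℝ (Fin d))) (o : EuclideanSpace ℝ (Fin d)) :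
    Set (EuclideanSpace ℝ (Fin d)) :=
  {x | ∃ t : ℝ, 0 ≤ t ∧ ∃ u ∈ asymDirs A o, x = t • u}

lemma V2_eta' (v : EuclideanSpace ℝ (Fin 2)) : V2 (v 0) (v 1) = v := by
  ext i; fin_cases i <;> simp [V2]

lemma norm_sq_eq' (u : EuclideanSpace ℝ (Fin 2)) : ‖u‖^2 = (u 0)^2 + (u 1)^2 := by
  rw [EuclideanSpace.norm_eq, Real.sq_sqrt (by positivity)]
  simp [Fin.sum_univ_two, sq_abs]

lemma exists_angle' (x y : ℝ) (h : x^2 + y^2 = 1) :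
    ∃ θ : ℝ, 0 ≤ θ ∧ θ ≤ 2*Real.pi ∧ Real.cos θ = x ∧ Real.sin θ = y := by
  have hx1 : -1 ≤ x := by nlinarith [sq_nonneg y]
  have hx2 : x ≤ 1 := by nlinarith [sq_nonneg y]
  by_cases hy : 0 ≤ y
  · refine ⟨Real.arccos x, Real.arccos_nonneg x, ?_, Real.cos_arccos hx1 hx2, ?_⟩
    · linarith [Real.arccos_le_pi x, Real.pi_pos]
    · rw [Real.sin_arccos, show 1 - x^2 = y^2 by linarith, Real.sqrt_sq hy]
  · refine ⟨2*Real.pi - Real.arccos x, ?_, ?_, ?_, ?_⟩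
    · linarith [Real.arccos_le_pi x, Real.pi_pos]
    · linarith [Real.arccos_nonneg x]
    · rw [Real.cos_sub, Real.cos_two_pi, Real.sin_two_pi]
      simp [Real.cos_arccos hx1 hx2]
    · rw [Real.sin_sub, Real.cos_two_pi, Real.sin_two_pi, Real.sin_arccos,
        show 1 - x^2 = y^2 by linarith, Real.sqrt_sq_eq_abs, abs_of_neg (lt_of_not_ge hy)]
      ring

lemma spiral_key (φ : ℝ → ℝ) (hpos : ∀ t ∈ Set.Ici (0:ℝ), 0 < φ t)
    (hanti : AntitoneOn φ (Set.Ici 0)) (hlim : Tendsto φ atTop (nhds 0))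
    (u : EuclideanSpace ℝ (Fin 2)) (hu : ‖u‖ = 1) :
    ∃ a : ℕ → EuclideanSpace ℝ (Fin 2), (∀ n, a n ∈ spiral φ) ∧
      (∀ n, ‖a n‖⁻¹ • a n = u) ∧ (∀ n, a n ≠ 0) ∧
      Tendsto a atTop (nhds 0) ∧
      ∀ n : ℕ, 1 ≤ n → φ (2*Real.pi*n) ≤ ‖a n‖ ∧ ‖a n‖ ≤ φ (2*Real.pi*((n:ℝ)-1)) := by
  have hsq : (u 0)^2 + (u 1)^2 = 1 := by
    have := norm_sq_eq' u; rw [hu] at this; linarith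
  obtain ⟨θ, hθ0, hθ2, hcosθ, hsinθ⟩ := exists_angle' (u 0) (u 1) hsq
  have huθ : V2 (Real.cos θ) (Real.sin θ) = u := by
    rw [hcosθ, hsinθ]; exact V2_eta' u
  set t : ℕ → ℝ := fun n => θ + (n - 1 : ℕ) * (2 * Real.pi) with ht
  have hπ : (0:ℝ) < Real.pi := Real.pi_pos
  have htnn : ∀ n, 0 ≤ t n := fun n =>
    add_nonneg hθ0 (mul_nonneg (Nat.cast_nonneg _) (by positivity))
  have hφt : ∀ n, 0 < φ (t n) := fun n => hpos _ (htnn n)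
  refine ⟨fun n => φ (t n) • u, ?_, ?_, ?_, ?_, ?_⟩
  · intro n
    left
    refine ⟨t n, htnn n, ?_⟩
    rw [ht]
    simp only
    rw [Real.cos_add_nat_mul_two_pi, Real.sin_add_nat_mul_two_pi, huθ]
  · intro n
    have hn : ‖φ (t n) • u‖ = φ (t n) := by
      rw [norm_smul, hu, Real.norm_eq_abs, abs_of_pos (hφt n), mul_one]
    rw [hn, smul_smul, inv_mul_cancel₀ (ne_of_gt (hφt n)), one_smul]
  · intro n
    simp only [ne_eq, smul_eq_zero, not_or]
    constructor
    · exact ne_of_gt (hφt n)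
    · intro h; rw [h, norm_zero] at hu; norm_num at hu
  · have htt : Tendsto t atTop atTop := by
      apply tendsto_atTop_add_const_left
      apply Tendsto.atTop_mul_const (by positivity)
      exact tendsto_natCast_atTop_atTop.comp (tendsto_sub_atTop_nat 1)
    have h0 : Tendsto (fun n => φ (t n)) atTop (nhds 0) := hlim.comp htt
    have := h0.smul_const u
    simpa using this
  · intro n hn
    have hcast : ((n - 1 : ℕ) : ℝ) = (n : ℝ) - 1 := by
      rw [Nat.cast_sub hn]; norm_num
    have hnorm : ‖φ (t n) • u‖ = φ (t n) := by
      rw [norm_smul, hu, Real.norm_eq_abs, abs_of_pos (hφt n), mul_one]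
    rw [hnorm]
    have h1 : (0:ℝ) ≤ 2 * Real.pi * ((n:ℝ) - 1) := by
      have : (1:ℝ) ≤ (n:ℝ) := by exact_mod_cast hn
      nlinarith
    have h2 : (0:ℝ) ≤ 2 * Real.pi * n := by positivity
    constructor
    · apply hanti (htnn n) h2
      rw [ht]; simp only [hcast]; nlinarith
    · apply hanti h1 (htnn n)
      rw [ht]; simp only [hcast]; nlinarith

/-- For any continuous `φ` monotonically decreasing to zero, every unit vector is an asymptotic
direction of the spiral `C_φ` at the origin (so `D(C_φ) = S¹`); moreover each unit vector `u` is
realized by points `a n` of the spiral pointing exactly in direction `u` with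
`r (n+1) ≤ ‖a n‖ ≤ r n` for all `n ≥ 1`, where `r n = φ (2π(n-1))` are the winding radii. -/
theorem spiral_all_directions (φ : ℝ → ℝ) (hcont : ContinuousOn φ (Set.Ici 0))
    (hpos : ∀ t ∈ Set.Ici (0 : ℝ), 0 < φ t) (hle : ∀ t ∈ Set.Ici (0 : ℝ), φ t ≤ 1)
    (hanti : AntitoneOn φ (Set.Ici 0)) (hlim : Tendsto φ atTop (nhds 0)) :
    asymDirs (spiral φ) 0 = {u : EuclideanSpace ℝ (Fin 2) | ‖u‖ = 1} ∧
    ∀ u : EuclideanSpace ℝ (Fin 2), ‖u‖ = 1 →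
      ∃ a : ℕ → EuclideanSpace ℝ (Fin 2), (∀ n, a n ∈ spiral φ) ∧
        (∀ n, ‖a n‖⁻¹ • a n = u) ∧
        ∀ n : ℕ, 1 ≤ n →
          φ (2 * Real.pi * n) ≤ ‖a n‖ ∧ ‖a n‖ ≤ φ (2 * Real.pi * ((n : ℝ) - 1)) := by
  constructor
  · ext u
    constructor
    · exact fun h => h.1
    · intro hu
      obtain ⟨a, hmem, hdir, hne, htend, _⟩ := spiral_key φ hpos hanti hlim u hu
      refine ⟨hu, a, hmem, hne, htend, ?_⟩
      have : (fun n => ‖a n - 0‖⁻¹ • (a n - 0)) = fun _ => u := by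
        funext n; rw [sub_zero]; exact hdir n
      rw [this]
      exact tendsto_const_nhds
  · intro u hu
    obtain ⟨a, hmem, hdir, _, _, hbd⟩ := spiral_key φ hpos hanti hlim u hu
    exact ⟨a, hmem, hdir, hbd⟩
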